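/- arXiv:1805.03547 — 2 statements merged into one kernel-verified Lean document; each statement's English description precedes it below -/
import Mathlib

section
/- Let 0 < c < 1/(6+√30), and take X_1 = (1−c)(1,0), X_2 = (1−c)(−1/2, √3/2), X_3 = (1−c)(−1/2, −√3/2), with V_j and A_j = cI + V_j as in the Kaijser–Varopoulos construction (so (V_j)_{12} = x_j, (V_j)_{13} = y_j, (V_j)_{24} = x_j, (V_j)_{34} = y_j with (x_j,y_j) = X_j). Then A_1, A_2, A_3 are commuting invertible contractions on C⁴ and ‖p_V(A_1, A_2, A_3)‖ ≥ 6(1−c)² > 5 ≥ sup_{z ∈ D³}|p_V(z)|, where p_V(z) = z_1²+z_2²+z_3²−2z_1z_2−2z_2z_3−2z_3z_1. In particular, (A_1, A_2, A_3) does not satisfy von Neumann's inequality. -/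
/-- `T^α = T_1^{α_1} ⋯ T_d^{α_d}` for a (commuting) tuple in a possibly noncommutative ring. -/
noncomputable def tuplePow {d : ℕ} {R : Type*} [Monoid R] (T : Fin d → R) (α : Fin d →₀ ℕ) : R :=
  (List.ofFn fun j => T j ^ α j).prod

/-- Evaluation `p(T) = Σ_α a_α T^α` of a polynomial on a tuple of operators. -/
noncomputable def polyEval {d : ℕ} {R : Type*} [Ring R] [Algebra ℂ R] (T : Fin d → R)
    (p : MvPolynomial (Fin d) ℂ) : R :=
  (AddMonoidAlgebra.coeff p).sum fun α a => a • tuplePow T α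

/-- `sup_{z ∈ 𝔻^d} |p(z)|`, the supremum of `|p|` over the open unit polydisc. -/
noncomputable def polySup {d : ℕ} (p : MvPolynomial (Fin d) ℂ) : ℝ :=
  ⨆ z : {z : Fin d → ℂ // ∀ i, ‖z i‖ < 1}, ‖MvPolynomial.eval z.1 p‖

/-- The Kaijser–Varopoulos nilpotent `4 × 4` matrix with parameters `x, y ∈ ℝ`. -/
noncomputable def KVmatrix (x y : ℝ) : Matrix (Fin 4) (Fin 4) ℂ :=
  !![0, (x : ℂ), (y : ℂ), 0;
     0, 0, 0, (x : ℂ);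
     0, 0, 0, (y : ℂ);
     0, 0, 0, 0]

/-- The Varopoulos–Kaijser polynomial
`p_V(z) = z₁² + z₂² + z₃² − 2z₁z₂ − 2z₂z₃ − 2z₃z₁` as a formal polynomial. -/
noncomputable def pVpoly : MvPolynomial (Fin 3) ℂ :=
  MvPolynomial.X 0 ^ 2 + MvPolynomial.X 1 ^ 2 + MvPolynomial.X 2 ^ 2 -
    2 * MvPolynomial.X 0 * MvPolynomial.X 1 - 2 * MvPolynomial.X 1 * MvPolynomial.X 2 -
    2 * MvPolynomial.X 2 * MvPolynomial.X 0

/-!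
On the torus, `p_V` is homogeneous of degree two, so one may take `z₁ = 1`, `z₂ = η²` with
`|η| = 1`; writing `z₃ = η w` gives `p_V = η² ((w - 2 Re η)² - 4)`, whose modulus is at most `5`
by an elementary estimate; the maximum modulus principle in each variable carries the bound to the
polydisc. On the other side, `V_j V_k = ⟨X_j, X_k⟩ E₁₄`, so the `A_j` commute and the `(1,4)` entry
of `p_V(A)` is `Σ_j |X_j|² - 2 Σ_{j<k} ⟨X_j, X_k⟩ = 6(1-c)²`, since the `X_j` have length `1 - c`
and make angles `2π/3`.
-/

open Matrix MvPolynomial WithLp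

def pV (z₁ z₂ z₃ : ℂ) : ℂ := z₁ ^ 2 + z₂ ^ 2 + z₃ ^ 2 - 2 * z₁ * z₂ - 2 * z₂ * z₃ - 2 * z₃ * z₁

/-- The quadratic in `t` is at least its minimum `-(3 + a²)` and at most `1 - 4at`. -/
lemma sq_four_mul_sq_sub_le {a t : ℝ} (ha : |a| ≤ 1) (ht : |t| ≤ 1) :
    (4 * t ^ 2 - 4 * a * t - 3) ^ 2 ≤ 9 + 16 * a ^ 2 := by
  have ha2 : a ^ 2 ≤ 1 := sq_le_one_iff_abs_le_one a |>.mpr ha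
  have ht2 : t ^ 2 ≤ 1 := sq_le_one_iff_abs_le_one t |>.mpr ht
  have hat : |a * t| ≤ 1 := by rw [abs_mul]; exact mul_le_one₀ ha (abs_nonneg t) ht
  rcases le_total 0 (4 * t ^ 2 - 4 * a * t - 3) with hpos | hneg
  · nlinarith [abs_le.mp hat]
  · nlinarith [sq_nonneg (2 * t - a)]

lemma norm_sq_sub_four_le_five {w : ℂ} (hw : ‖w‖ = 1) {t : ℝ} (ht : |t| ≤ 1) :
    ‖(w - 2 * t) ^ 2 - 4‖ ≤ 5 := by
  have hw' : w.re ^ 2 + w.im ^ 2 = 1 := by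
    have h := Complex.sq_norm w
    rw [hw, Complex.normSq_apply] at h
    linarith
  have hsq : ‖(w - 2 * t) ^ 2 - 4‖ ^ 2 =
      (4 * t ^ 2 - 4 * w.re * t - 3) ^ 2 + 16 * (1 - w.re ^ 2) := by
    rw [Complex.sq_norm, Complex.normSq_apply]
    simp only [Complex.sub_re, Complex.sub_im, pow_two, Complex.mul_re, Complex.mul_im,
      Complex.ofReal_re, Complex.ofReal_im, Complex.re_ofNat, Complex.im_ofNat]
    linear_combination (w.re ^ 2 + w.im ^ 2 + 9 + 8 * t ^ 2 - 8 * w.re * t) * hw'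
  refine (sq_le_sq₀ (norm_nonneg _) (by norm_num)).mp ?_
  rw [hsq]
  nlinarith [sq_four_mul_sq_sub_le ((Complex.abs_re_le_norm w).trans hw.le) ht]

lemma norm_pV_le_five_of_norm_eq_one {z₁ z₂ z₃ : ℂ} (h₁ : ‖z₁‖ = 1) (h₂ : ‖z₂‖ = 1)
    (h₃ : ‖z₃‖ = 1) : ‖pV z₁ z₂ z₃‖ ≤ 5 := by
  have hz₁ : z₁ ≠ 0 := norm_ne_zero_iff.mp (by simp [h₁])
  obtain ⟨η, hη⟩ := IsAlgClosed.exists_pow_nat_eq (z₂ / z₁) two_pos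
  have hη₁ : ‖η‖ = 1 := by
    have h := congrArg norm hη
    rw [norm_pow, norm_div, h₁, h₂, div_one] at h
    exact (pow_eq_one_iff_of_nonneg (norm_nonneg η) two_ne_zero).mp h
  have hη₀ : η ≠ 0 := norm_ne_zero_iff.mp (by simp [hη₁])
  set w := z₃ / (z₁ * η)
  have hw : ‖w‖ = 1 := by simp [w, h₁, h₃, hη₁]
  have hpV : pV z₁ z₂ z₃ = z₁ ^ 2 * η ^ 2 * ((w - (η + η⁻¹)) ^ 2 - 4) := by
    have hz₂ : z₂ = z₁ * η ^ 2 := by rw [hη]; field_simp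
    have hz₃ : z₃ = z₁ * η * w := by simp only [w]; field_simp
    rw [pV, hz₂, hz₃]; field_simp; ring
  rw [hpV, Complex.inv_eq_conj hη₁, Complex.add_conj, Complex.ofReal_mul, Complex.ofReal_ofNat,
    norm_mul, norm_mul, norm_pow, norm_pow, h₁, hη₁, one_pow, one_mul, one_mul]
  exact norm_sq_sub_four_le_five hw ((Complex.abs_re_le_norm η).trans hη₁.le)

lemma norm_le_of_forall_norm_eq_one {E : Type*} [NormedAddCommGroup E] [NormedSpace ℂ E]
    {F : ℂ → E} (hF : Differentiable ℂ F) {M : ℝ} (hM : ∀ z, ‖z‖ = 1 → ‖F z‖ ≤ M) {z : ℂ}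
    (hz : ‖z‖ ≤ 1) : ‖F z‖ ≤ M := by
  refine Complex.norm_le_of_forall_mem_frontier_norm_le Metric.isBounded_ball hF.diffContOnCl
    (fun w hw ↦ hM w ?_) (closure_ball (0 : ℂ) one_ne_zero ▸ mem_closedBall_zero_iff.mpr hz)
  rwa [frontier_ball (0 : ℂ) one_ne_zero, mem_sphere_zero_iff_norm] at hw

lemma norm_pV_le_five {z₁ z₂ z₃ : ℂ} (h₁ : ‖z₁‖ ≤ 1) (h₂ : ‖z₂‖ ≤ 1) (h₃ : ‖z₃‖ ≤ 1) :
    ‖pV z₁ z₂ z₃‖ ≤ 5 := by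
  have hdiff₁ : ∀ z₂ z₃, Differentiable ℂ fun z ↦ pV z z₂ z₃ := by unfold pV; fun_prop
  have hdiff₂ : ∀ z₁ z₃, Differentiable ℂ fun z ↦ pV z₁ z z₃ := by unfold pV; fun_prop
  have hdiff₃ : ∀ z₁ z₂, Differentiable ℂ fun z ↦ pV z₁ z₂ z := by unfold pV; fun_prop
  have step₁ : ∀ {z₁ z₂ z₃ : ℂ}, ‖z₁‖ ≤ 1 → ‖z₂‖ = 1 → ‖z₃‖ = 1 → ‖pV z₁ z₂ z₃‖ ≤ 5 :=
    fun h₁ h₂ h₃ ↦ norm_le_of_forall_norm_eq_one (hdiff₁ _ _)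
      (fun _ hz ↦ norm_pV_le_five_of_norm_eq_one hz h₂ h₃) h₁
  have step₂ : ∀ {z₁ z₂ z₃ : ℂ}, ‖z₁‖ ≤ 1 → ‖z₂‖ ≤ 1 → ‖z₃‖ = 1 → ‖pV z₁ z₂ z₃‖ ≤ 5 :=
    fun h₁ h₂ h₃ ↦ norm_le_of_forall_norm_eq_one (hdiff₂ _ _) (fun _ hz ↦ step₁ h₁ hz h₃) h₂
  exact norm_le_of_forall_norm_eq_one (hdiff₃ _ _) (fun _ hz ↦ step₂ h₁ h₂ hz) h₃

lemma polySup_pVpoly_le_five : polySup pVpoly ≤ 5 := by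
  have : Nonempty {z : Fin 3 → ℂ // ∀ i, ‖z i‖ < 1} := ⟨⟨0, by simp⟩⟩
  refine ciSup_le fun z ↦ ?_
  simpa [pVpoly, pV] using norm_pV_le_five (z.2 0).le (z.2 1).le (z.2 2).le

section polyEval

variable {d : ℕ} {R : Type*} [Ring R] [Algebra ℂ R]

lemma polyEval_add (T : Fin d → R) (p q : MvPolynomial (Fin d) ℂ) :
    polyEval T (p + q) = polyEval T p + polyEval T q :=
  Finsupp.sum_add_index' (fun _ ↦ zero_smul ℂ _) fun _ a b ↦ add_smul a b _

lemma polyEval_sub (T : Fin d → R) (p q : MvPolynomial (Fin d) ℂ) :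
    polyEval T (p - q) = polyEval T p - polyEval T q :=
  Finsupp.sum_sub_index fun _ a b ↦ sub_smul a b _

lemma polyEval_monomial (T : Fin d → R) (α : Fin d →₀ ℕ) (a : ℂ) :
    polyEval T (monomial α a) = a • tuplePow T α :=
  sum_monomial_eq (zero_smul ℂ _)

lemma map_polyEval {S F : Type*} [Ring S] [Algebra ℂ S] [FunLike F R S] [AlgHomClass F ℂ R S]
    (f : F) (T : Fin d → R) (p : MvPolynomial (Fin d) ℂ) :
    f (polyEval T p) = polyEval (fun j ↦ f (T j)) p := by
  simp [polyEval, tuplePow, Finsupp.sum, map_list_prod, List.map_ofFn, Function.comp_def]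

end polyEval

lemma two_mul_X_mul_X {σ A : Type*} [CommSemiring A] (i j : σ) :
    (2 : MvPolynomial σ A) * X i * X j = monomial (Finsupp.single i 1 + Finsupp.single j 1) 2 := by
  rw [mul_assoc, X, X, monomial_mul, ← map_ofNat C 2, C_mul_monomial]
  norm_num

lemma polyEval_pVpoly {R : Type*} [Ring R] [Algebra ℂ R] (T : Fin 3 → R) :
    polyEval T pVpoly = T 0 ^ 2 + T 1 ^ 2 + T 2 ^ 2
      - (2 : ℂ) • (T 0 * T 1) - (2 : ℂ) • (T 1 * T 2) - (2 : ℂ) • (T 0 * T 2) := by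
  simp only [pVpoly, two_mul_X_mul_X, X_pow_eq_monomial, polyEval_add, polyEval_sub,
    polyEval_monomial]
  simp [tuplePow, List.ofFn_succ, Finsupp.single_apply]

lemma norm_entry_le_norm_toEuclideanCLM {𝕜 n : Type*} [RCLike 𝕜] [Fintype n] [DecidableEq n]
    (M : Matrix n n 𝕜) (i j : n) : ‖M i j‖ ≤ ‖toEuclideanCLM (n := n) (𝕜 := 𝕜) M‖ := by
  set T := toEuclideanCLM (n := n) (𝕜 := 𝕜) M
  calc ‖M i j‖ = ‖T (toLp 2 (Pi.single j 1)) i‖ := by simp [T]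
    _ ≤ ‖T (toLp 2 (Pi.single j 1))‖ := PiLp.norm_apply_le _ i
    _ ≤ ‖T‖ := by grw [T.le_opNorm]; simp

lemma norm_mul_add_mul_sq_le (a b : ℝ) (u v : ℂ) :
    ‖(a : ℂ) * u + b * v‖ ^ 2 ≤ (a ^ 2 + b ^ 2) * (‖u‖ ^ 2 + ‖v‖ ^ 2) := by
  have htri := norm_add_le ((a : ℂ) * u) (b * v)
  rw [norm_mul, norm_mul, Complex.norm_real, Complex.norm_real, Real.norm_eq_abs,
    Real.norm_eq_abs] at htri
  calc ‖(a : ℂ) * u + b * v‖ ^ 2 ≤ (|a| * ‖u‖ + |b| * ‖v‖) ^ 2 := by gcongr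
    _ ≤ (a ^ 2 + b ^ 2) * (‖u‖ ^ 2 + ‖v‖ ^ 2) := by
      nlinarith [sq_nonneg (|a| * ‖v‖ - |b| * ‖u‖), sq_abs a, sq_abs b]

lemma KVmatrix_add (a b a' b' : ℝ) :
    KVmatrix a b + KVmatrix a' b' = KVmatrix (a + a') (b + b') := by
  ext i j; fin_cases i <;> fin_cases j <;> simp [KVmatrix]

lemma KVmatrix_mul_KVmatrix (a b a' b' : ℝ) :
    KVmatrix a b * KVmatrix a' b' = single 0 3 ((a * a' + b * b' : ℝ) : ℂ) := by
  ext i j; fin_cases i <;> fin_cases j <;> simp [KVmatrix, mul_apply, Fin.sum_univ_four]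

lemma KVmatrix_pow_three (a b : ℝ) : KVmatrix a b ^ 3 = 0 := by
  rw [pow_succ, pow_two, KVmatrix_mul_KVmatrix]
  ext i j; fin_cases i <;> fin_cases j <;> simp [KVmatrix, mul_apply, Fin.sum_univ_four]

lemma isNilpotent_KVmatrix (a b : ℝ) : IsNilpotent (KVmatrix a b) := ⟨3, KVmatrix_pow_three a b⟩

lemma KVmatrix_mulVec (a b : ℝ) (v : Fin 4 → ℂ) :
    KVmatrix a b *ᵥ v = ![a * v 1 + b * v 2, a * v 3, b * v 3, 0] := by
  ext i; fin_cases i <;> simp [KVmatrix, mulVec, dotProduct, Fin.sum_univ_four]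

lemma smul_one_add_KVmatrix_mul (c a b a' b' : ℝ) :
    ((c : ℂ) • 1 + KVmatrix a b) * ((c : ℂ) • 1 + KVmatrix a' b') =
      (c : ℂ) ^ 2 • 1 + (c : ℂ) • KVmatrix (a + a') (b + b') +
        single 0 3 ((a * a' + b * b' : ℝ) : ℂ) := by
  rw [← KVmatrix_add, ← KVmatrix_mul_KVmatrix]
  simp only [add_mul, mul_add, one_mul, mul_one, smul_mul_assoc, mul_smul_comm, smul_add,
    smul_smul, pow_two]
  abel

lemma commute_smul_one_add_KVmatrix (c a b a' b' : ℝ) :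
    Commute ((c : ℂ) • (1 : Matrix (Fin 4) (Fin 4) ℂ) + KVmatrix a b)
      ((c : ℂ) • 1 + KVmatrix a' b') := by
  rw [Commute, SemiconjBy, smul_one_add_KVmatrix_mul, smul_one_add_KVmatrix_mul, add_comm a,
    add_comm b, mul_comm a, mul_comm b]

lemma smul_one_add_KVmatrix_mul_apply_zero_three (c a b a' b' : ℝ) :
    (((c : ℂ) • 1 + KVmatrix a b) * ((c : ℂ) • 1 + KVmatrix a' b')) 0 3 =
      ((a * a' + b * b' : ℝ) : ℂ) := by
  rw [smul_one_add_KVmatrix_mul]; simp [KVmatrix]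

lemma polyEval_pVpoly_smul_one_add_KVmatrix_apply_zero_three (c : ℝ) (x y : Fin 3 → ℝ) :
    polyEval (fun j ↦ (c : ℂ) • (1 : Matrix (Fin 4) (Fin 4) ℂ) + KVmatrix (x j) (y j))
        pVpoly 0 3 =
      ((x 0 ^ 2 + y 0 ^ 2) + (x 1 ^ 2 + y 1 ^ 2) + (x 2 ^ 2 + y 2 ^ 2)
        - 2 * (x 0 * x 1 + y 0 * y 1) - 2 * (x 1 * x 2 + y 1 * y 2)
        - 2 * (x 0 * x 2 + y 0 * y 2) : ℝ) := by
  simp only [polyEval_pVpoly, pow_two, Matrix.sub_apply, Matrix.add_apply, Matrix.smul_apply,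
    smul_one_add_KVmatrix_mul_apply_zero_three, smul_eq_mul]
  push_cast; ring

lemma isUnit_smul_one_add_KVmatrix {c : ℝ} (hc : c ≠ 0) (a b : ℝ) :
    IsUnit ((c : ℂ) • (1 : Matrix (Fin 4) (Fin 4) ℂ) + KVmatrix a b) := by
  have hunit : IsUnit ((c : ℂ) • (1 : Matrix (Fin 4) (Fin 4) ℂ)) := by
    rw [← Algebra.algebraMap_eq_smul_one]
    exact IsUnit.map _ (Ne.isUnit (by exact_mod_cast hc))
  have hcomm : Commute (KVmatrix a b) ((c : ℂ) • 1) := (Commute.one_right _).smul_right _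
  exact (isNilpotent_KVmatrix a b).isUnit_add_left_of_commute hunit hcomm

lemma norm_toEuclideanCLM_KVmatrix_le (a b : ℝ) :
    ‖toEuclideanCLM (𝕜 := ℂ) (KVmatrix a b)‖ ≤ √(a ^ 2 + b ^ 2) := by
  refine ContinuousLinearMap.opNorm_le_bound _ (Real.sqrt_nonneg _) fun v ↦ ?_
  refine (sq_le_sq₀ (norm_nonneg _) (by positivity)).mp ?_
  have hCS := norm_mul_add_mul_sq_le a b (v 1) (v 2)
  simp only [EuclideanSpace.norm_sq_eq, Fin.sum_univ_four, ofLp_toEuclideanCLM, KVmatrix_mulVec,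
    mul_pow, Real.sq_sqrt (by positivity : 0 ≤ a ^ 2 + b ^ 2)]
  simp only [cons_val, norm_mul, Complex.norm_real, Real.norm_eq_abs, mul_pow, sq_abs,
    norm_zero]
  nlinarith [sq_nonneg ‖v 0‖]

lemma norm_toEuclideanCLM_smul_one_add_KVmatrix_le (c a b : ℝ) :
    ‖toEuclideanCLM (𝕜 := ℂ) ((c : ℂ) • (1 : Matrix (Fin 4) (Fin 4) ℂ) + KVmatrix a b)‖ ≤
      |c| + √(a ^ 2 + b ^ 2) := by
  rw [map_add, map_smul, map_one]
  grw [norm_add_le, norm_smul, norm_one, norm_toEuclideanCLM_KVmatrix_le]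
  simp

lemma five_lt_six_mul_one_sub_sq {c : ℝ} (hc : c < 1 / (6 + √30)) : 5 < 6 * (1 - c) ^ 2 := by
  have h30 : √30 ^ 2 = 30 := Real.sq_sqrt (by norm_num)
  have hpos : 0 < 6 + √30 := by positivity
  have h : 5 + √30 < (6 + √30) * (1 - c) := by
    rw [lt_div_iff₀ hpos] at hc; linarith
  nlinarith [Real.sqrt_nonneg 30]

/-- For `0 < c < 1/(6+√30)` and `X₁ = (1−c)(1,0)`,
`X₂ = (1−c)(−1/2, √3/2)`, `X₃ = (1−c)(−1/2, −√3/2)`, the matrices `A_j = cI + V_j` of the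
Kaijser–Varopoulos construction are commuting invertible contractions on `ℂ⁴`, and
`‖p_V(A₁,A₂,A₃)‖ ≥ 6(1−c)² > 5 ≥ sup_{z∈𝔻³}|p_V(z)|`. In particular `(A₁,A₂,A₃)` does not
satisfy von Neumann's inequality. -/
theorem KV_counterexample (c : ℝ) (hc : 0 < c) (hc' : c < 1 / (6 + Real.sqrt 30))
    (x y : Fin 3 → ℝ)
    (hx : x = ![1 - c, (1 - c) * (-1 / 2), (1 - c) * (-1 / 2)])
    (hy : y = ![0, (1 - c) * (Real.sqrt 3 / 2), (1 - c) * (-(Real.sqrt 3) / 2)])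
    (A : Fin 3 → Matrix (Fin 4) (Fin 4) ℂ)
    (hA : ∀ j, A j = (c : ℂ) • (1 : Matrix (Fin 4) (Fin 4) ℂ) + KVmatrix (x j) (y j)) :
    (∀ j k, A j * A k = A k * A j) ∧
    (∀ j, IsUnit (A j)) ∧
    (∀ j, ‖Matrix.toEuclideanCLM (𝕜 := ℂ) (A j)‖ ≤ 1) ∧
    ‖polyEval (fun j => Matrix.toEuclideanCLM (𝕜 := ℂ) (A j)) pVpoly‖ ≥ 6 * (1 - c) ^ 2 ∧
    6 * (1 - c) ^ 2 > 5 ∧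
    (5 : ℝ) ≥ polySup pVpoly ∧
    ¬ (∀ p : MvPolynomial (Fin 3) ℂ,
        ‖polyEval (fun j => Matrix.toEuclideanCLM (𝕜 := ℂ) (A j)) p‖ ≤ polySup p) := by
  have h3 : √3 ^ 2 = 3 := Real.sq_sqrt (by norm_num)
  have hc1 : c ≤ 1 :=
    hc'.le.trans <| (div_le_one (by positivity)).mpr (by linarith [Real.sqrt_nonneg 30])
  have hlength : ∀ j, x j ^ 2 + y j ^ 2 = (1 - c) ^ 2 := by
    subst hx hy
    intro j
    fin_cases j <;> simp only [Fin.zero_eta, Fin.mk_one, Fin.reduceFinMk, cons_val]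
    · ring
    · linear_combination (1 - c) ^ 2 / 4 * h3
    · linear_combination (1 - c) ^ 2 / 4 * h3
  have hentry : polyEval A pVpoly 0 3 = ((6 * (1 - c) ^ 2 : ℝ) : ℂ) := by
    rw [funext hA, polyEval_pVpoly_smul_one_add_KVmatrix_apply_zero_three]
    congr 1
    subst hx hy
    simp only [cons_val]
    linear_combination (1 - c) ^ 2 * h3
  have hlower : ‖polyEval (fun j ↦ toEuclideanCLM (𝕜 := ℂ) (A j)) pVpoly‖ ≥ 6 * (1 - c) ^ 2 := by
    rw [← map_polyEval]
    grw [← norm_entry_le_norm_toEuclideanCLM _ 0 3, hentry, Complex.norm_real,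
      Real.norm_of_nonneg (by positivity)]
  refine ⟨fun j k ↦ ?_, fun j ↦ ?_, fun j ↦ ?_, hlower, five_lt_six_mul_one_sub_sq hc',
    polySup_pVpoly_le_five, fun h ↦ ?_⟩
  · rw [hA, hA]; exact commute_smul_one_add_KVmatrix c _ _ _ _
  · rw [hA]; exact isUnit_smul_one_add_KVmatrix hc.ne' _ _
  · grw [hA, norm_toEuclideanCLM_smul_one_add_KVmatrix_le, hlength, Real.sqrt_sq (by linarith),
      abs_of_pos hc]
    simp
  · linarith [h pVpoly, five_lt_six_mul_one_sub_sq hc', polySup_pVpoly_le_five]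
end

section
/- Let B = (B_1, ..., B_d) be a commuting d-tuple of contractions on a Hilbert space K such that there is a unital multiplicative linear functional χ on the unital Banach algebra generated by B_1, ..., B_d with χ(B_j) = 1 for all j. Then for any commuting d-tuple A of bounded operators on a Hilbert space H and any polynomial p in d variables, ‖p(A ⊗ B)‖ ≥ ‖p(A)‖, where A ⊗ B = (A_1 ⊗ B_1, ..., A_d ⊗ B_d). -/
lemma polyEval_eq_sum {d : ℕ} {R : Type*} [Ring R] [Algebra ℂ R] (T : Fin d → R)
    (p : MvPolynomial (Fin d) ℂ) :
    polyEval T p = ∑ α ∈ p.support, p.coeff α • tuplePow T α := rfl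

lemma tuplePow_mem {d : ℕ} {M : Type*} [Monoid M] (S : Submonoid M) {T : Fin d → M}
    (hT : ∀ j, T j ∈ S) (α : Fin d →₀ ℕ) : tuplePow T α ∈ S :=
  S.list_prod_mem <| by
    simp only [List.mem_ofFn]
    rintro _ ⟨j, rfl⟩
    exact pow_mem (hT j) _

lemma map_tuplePow {d : ℕ} {M N F : Type*} [Monoid M] [Monoid N] [FunLike F M N]
    [MonoidHomClass F M N] (f : F) (T : Fin d → M) (α : Fin d →₀ ℕ) :
    f (tuplePow T α) = tuplePow (f ∘ T) α := by
  simp [tuplePow, map_list_prod, List.map_ofFn, Function.comp_def]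

lemma tuplePow_eq_prod_flatten {d : ℕ} {M : Type*} [Monoid M] (T : Fin d → M) (α : Fin d →₀ ℕ) :
    tuplePow T α = (List.ofFn fun j => List.replicate (α j) (T j)).flatten.prod := by
  simp [tuplePow, List.prod_flatten, List.map_ofFn, Function.comp_def]

section ListProd

variable {𝕜 E : Type*} [NontriviallyNormedField 𝕜] [SeminormedAddCommGroup E] [NormedSpace 𝕜 E]

lemma norm_list_prod_apply_sub_le (y : E) (l : List (E →L[𝕜] E)) (hl : ∀ T ∈ l, ‖T‖ ≤ 1) :
    ‖l.prod y - y‖ ≤ (l.map fun T => ‖T y - y‖).sum := by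
  induction l with
  | nil => simp
  | cons T l ih =>
    have hT : ‖T‖ ≤ 1 := hl T List.mem_cons_self
    have hsplit : (T :: l).prod y - y = T (l.prod y - y) + (T y - y) := by
      simp [map_sub]
    calc ‖(T :: l).prod y - y‖ ≤ ‖T (l.prod y - y)‖ + ‖T y - y‖ := hsplit ▸ norm_add_le _ _
      _ ≤ ‖l.prod y - y‖ + ‖T y - y‖ := by
        gcongr
        exact T.le_of_opNorm_le hT _ |>.trans_eq (one_mul _)
      _ ≤ ((T :: l).map fun T => ‖T y - y‖).sum := by
        rw [List.map_cons, List.sum_cons, add_comm]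
        gcongr
        exact ih fun S hS => hl S (List.mem_cons_of_mem _ hS)

lemma norm_tuplePow_apply_sub_le {d : ℕ} (B : Fin d → E →L[𝕜] E) (hB : ∀ j, ‖B j‖ ≤ 1)
    (y : E) {δ : ℝ} (hy : ∀ j, ‖B j y - y‖ ≤ δ) (α : Fin d →₀ ℕ) :
    ‖tuplePow B α y - y‖ ≤ α.degree * δ := by
  rw [tuplePow_eq_prod_flatten]
  refine (norm_list_prod_apply_sub_le y _ ?_).trans ?_
  · simp only [List.mem_flatten, List.mem_ofFn]
    rintro T ⟨_, ⟨j, rfl⟩, hT⟩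
    exact List.eq_of_mem_replicate hT ▸ hB j
  · simp only [List.map_flatten, List.sum_flatten, List.map_ofFn, List.sum_ofFn,
      Function.comp_def, List.map_replicate, List.sum_replicate, nsmul_eq_mul,
      Finsupp.degree_eq_sum, Nat.cast_sum, Finset.sum_mul]
    gcongr with j
    exact hy j

end ListProd

section Tensor

variable {𝕜 H K E : Type*} [RCLike 𝕜]
  [NormedAddCommGroup H] [InnerProductSpace 𝕜 H]
  [NormedAddCommGroup K] [InnerProductSpace 𝕜 K]
  [NormedAddCommGroup E] [InnerProductSpace 𝕜 E]
  (t : H →ₗ[𝕜] K →ₗ[𝕜] E)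

lemma norm_tensor_of_inner (ht : ∀ (x x' : H) (y y' : K),
      (inner 𝕜 (t x y) (t x' y') : 𝕜) = (inner 𝕜 x x' : 𝕜) * (inner 𝕜 y y' : 𝕜))
    (x : H) (y : K) : ‖t x y‖ = ‖x‖ * ‖y‖ := by
  have h := ht x x y y
  simp only [inner_self_eq_norm_sq_to_K] at h
  rw [← mul_pow] at h
  exact (pow_left_inj₀ (norm_nonneg _) (by positivity) two_ne_zero).mp (by exact_mod_cast h)

def tensorCompatible : Submonoid ((H →L[𝕜] H) × (K →L[𝕜] K) × (E →L[𝕜] E)) where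
  carrier := {U | ∀ x y, U.2.2 (t x y) = t (U.1 x) (U.2.1 y)}
  mul_mem' {U V} hU hV x y := by
    simp only [Prod.fst_mul, Prod.snd_mul, mul_apply_eq_comp]
    rw [hV x y, hU]
  one_mem' := by simp

lemma tuplePow_apply_tensor {d : ℕ} (A : Fin d → H →L[𝕜] H) (B : Fin d → K →L[𝕜] K)
    (AB : Fin d → E →L[𝕜] E) (hAB : ∀ j x y, AB j (t x y) = t (A j x) (B j y))
    (α : Fin d →₀ ℕ) (x : H) (y : K) :
    tuplePow AB α (t x y) = t (tuplePow A α x) (tuplePow B α y) := by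
  set U : Fin d → (H →L[𝕜] H) × (K →L[𝕜] K) × (E →L[𝕜] E) := fun j => (A j, B j, AB j)
  have hU := tuplePow_mem (tensorCompatible t) (T := U) (fun j => hAB j) α
  have h1 : (tuplePow U α).1 = tuplePow A α := map_tuplePow (MonoidHom.fst _ _) U α
  have h2 : (tuplePow U α).2.1 = tuplePow B α :=
    map_tuplePow ((MonoidHom.fst _ _).comp (MonoidHom.snd _ _)) U α
  have h3 : (tuplePow U α).2.2 = tuplePow AB α :=
    map_tuplePow ((MonoidHom.snd _ _).comp (MonoidHom.snd _ _)) U α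
  rw [← h1, ← h2, ← h3]
  exact hU x y

end Tensor

section Contractions

variable {𝕜 K : Type*} [RCLike 𝕜] [NormedAddCommGroup K] [InnerProductSpace 𝕜 K]

lemma norm_sub_sq_le_two_mul_re_inner {u y : K} (h : ‖u‖ ≤ ‖y‖) :
    ‖u - y‖ ^ 2 ≤ 2 * RCLike.re (inner 𝕜 (y - u) y) := by
  rw [norm_sub_sq (𝕜 := 𝕜), inner_sub_left, map_sub, inner_self_eq_norm_sq,
    ← inner_conj_symm, RCLike.conj_re]
  nlinarith [norm_nonneg u]

lemma norm_apply_sub_sq_le_two_mul_norm_sum {ι : Type*} [Fintype ι] {B : ι → K →L[𝕜] K}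
    (hB : ∀ i, ‖B i‖ ≤ 1) (y : K) (j : ι) :
    ‖B j y - y‖ ^ 2 ≤ 2 * ‖∑ i, (B i y - y)‖ * ‖y‖ := by
  have hdefect i : ‖B i y - y‖ ^ 2 ≤ 2 * RCLike.re (inner 𝕜 (y - B i y) y) :=
    norm_sub_sq_le_two_mul_re_inner ((B i).le_of_opNorm_le (hB i) y |>.trans_eq (one_mul _))
  calc ‖B j y - y‖ ^ 2 ≤ 2 * RCLike.re (inner 𝕜 (y - B j y) y) := hdefect j
    _ ≤ 2 * ∑ i, RCLike.re (inner 𝕜 (y - B i y) y) := by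
        gcongr
        exact Finset.single_le_sum (f := fun i => RCLike.re (inner 𝕜 (y - B i y) y))
          (fun i _ => by linarith [hdefect i, sq_nonneg ‖B i y - y‖]) (Finset.mem_univ j)
    _ = 2 * RCLike.re (inner 𝕜 (∑ i, (y - B i y)) y) := by rw [sum_inner, map_sum]
    _ ≤ 2 * (‖∑ i, (B i y - y)‖ * ‖y‖) := by
        gcongr
        refine (re_inner_le_norm _ _).trans_eq ?_
        rw [← norm_neg, ← Finset.sum_neg_distrib]
        simp only [neg_sub]
    _ = 2 * ‖∑ i, (B i y - y)‖ * ‖y‖ := by ring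

end Contractions

lemma exists_norm_apply_lt_of_mul_eq_one {𝕜 E : Type*} [NontriviallyNormedField 𝕜]
    [NormedAddCommGroup E] [NormedSpace 𝕜 E] {T S : E →L[𝕜] E} (hTS : T * S = 1) {ε : ℝ}
    (hε : 0 < ε) (hS : 1 < ε * ‖S‖) : ∃ y ≠ 0, ‖T y‖ < ε * ‖y‖ := by
  by_contra! hT
  have hS' : ‖S‖ ≤ ε⁻¹ := S.opNorm_le_bound (inv_nonneg.2 hε.le) fun w => by
    rcases eq_or_ne (S w) 0 with h0 | h0
    · rw [h0, norm_zero]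
      positivity
    · have h := hT (S w) h0
      rw [← mul_apply_eq_comp, hTS, one_apply_eq_self] at h
      rwa [le_inv_mul_iff₀ hε]
  have := mul_le_mul_of_nonneg_left hS' hε.le
  rw [mul_inv_cancel₀ hε.ne'] at this
  linarith

lemma exists_norm_apply_sub_le_of_algHom {𝕜 K : Type*} [RCLike 𝕜] [NormedAddCommGroup K]
    [NormedSpace 𝕜 K] [CompleteSpace K] {𝔅 : Subalgebra 𝕜 (K →L[𝕜] K)}
    (h𝔅 : IsClosed (𝔅 : Set (K →L[𝕜] K)))
    (χ : 𝔅 →ₐ[𝕜] 𝕜) {c : 𝔅} (hc : ‖c‖ ≤ 1) (hχc : χ c = 1) {ε : ℝ} (hε : 0 < ε) :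
    ∃ y ≠ 0, ‖(c : K →L[𝕜] K) y - y‖ ≤ ε * ‖y‖ := by
  have := h𝔅.completeSpace_coe
  have hone : ‖(1 : 𝔅)‖ ≤ 1 := ContinuousLinearMap.norm_id_le
  set r : ℝ := 1 + ε / 3 with hr_def
  have hr : (r : 𝕜) ∈ resolventSet 𝕜 c := by
    refine spectrum.mem_resolventSet_of_norm_lt_mul
      ((mul_le_one₀ hc (norm_nonneg _) hone).trans_lt ?_)
    rw [RCLike.norm_ofReal, abs_of_pos (by positivity)]
    linarith
  obtain ⟨u, hu⟩ := hr
  have hχu : χ u = ((ε / 3 : ℝ) : 𝕜) := by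
    rw [hu, map_sub, AlgHom.commutes, hχc, Algebra.algebraMap_self, RingHom.id_apply]
    push_cast [r]
    ring
  have hχu_inv : χ ↑u⁻¹ = ((ε / 3)⁻¹ : ℝ) := by
    rw [RCLike.ofReal_inv, ← hχu]
    exact eq_inv_of_mul_eq_one_left (by rw [← map_mul, Units.inv_mul, map_one])
  have hnorm : 3 / ε ≤ ‖((↑u⁻¹ : 𝔅) : K →L[𝕜] K)‖ := by
    have h := (AlgHom.norm_apply_le_self_mul_norm_one χ ↑u⁻¹).trans
      (mul_le_of_le_one_right (norm_nonneg _) hone)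
    rw [hχu_inv, RCLike.norm_ofReal, abs_of_pos (by positivity), inv_div] at h
    exact h
  have hmul : (u : K →L[𝕜] K) * (↑u⁻¹ : 𝔅) = 1 := congrArg Subtype.val u.mul_inv
  obtain ⟨y, hy0, hy⟩ := exists_norm_apply_lt_of_mul_eq_one hmul (ε := 2 * ε / 3)
    (by positivity) (by
      have := mul_le_mul_of_nonneg_left hnorm (by positivity : (0 : ℝ) ≤ 2 * ε / 3)
      have h2 : 2 * ε / 3 * (3 / ε) = 2 := by field_simp
      linarith)
  refine ⟨y, hy0, ?_⟩
  have hdecomp : (c : K →L[𝕜] K) y - y = ((ε / 3 : ℝ) : 𝕜) • y - (u : K →L[𝕜] K) y := by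
    rw [hu, Subalgebra.coe_sub, Subalgebra.coe_algebraMap, sub_apply,
      ContinuousLinearMap.algebraMap_apply, hr_def]
    push_cast
    module
  calc ‖(c : K →L[𝕜] K) y - y‖ ≤ ε / 3 * ‖y‖ + 2 * ε / 3 * ‖y‖ := by
        rw [hdecomp]
        refine (norm_sub_le _ _).trans (add_le_add ?_ hy.le)
        rw [norm_smul, RCLike.norm_ofReal, abs_of_pos (by positivity)]
    _ = ε * ‖y‖ := by ring

theorem exists_forall_norm_apply_sub_le_of_algHom {𝕜 K ι : Type*} [RCLike 𝕜]
    [NormedAddCommGroup K] [InnerProductSpace 𝕜 K] [CompleteSpace K] [Fintype ι]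
    {B : ι → K →L[𝕜] K} (hB : ∀ i, ‖B i‖ ≤ 1) {𝔅 : Subalgebra 𝕜 (K →L[𝕜] K)}
    (h𝔅 : IsClosed (𝔅 : Set (K →L[𝕜] K))) (hmem : ∀ i, B i ∈ 𝔅) (χ : 𝔅 →ₐ[𝕜] 𝕜)
    (hχ : ∀ i, χ ⟨B i, hmem i⟩ = 1) {δ : ℝ} (hδ : 0 < δ) :
    ∃ y ≠ 0, ∀ i, ‖B i y - y‖ ≤ δ * ‖y‖ := by
  set n : ℕ := Fintype.card ι + 1 with hn_def
  have hn : (n : 𝕜) ≠ 0 := Nat.cast_ne_zero.2 (Nat.succ_ne_zero _)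
  -- averaging the identity in as well keeps `n ≠ 0` for an empty family
  set c : 𝔅 := (n : 𝕜)⁻¹ • (1 + ∑ i, ⟨B i, hmem i⟩)
  have hc_coe : (c : K →L[𝕜] K) = (n : 𝕜)⁻¹ • (1 + ∑ i, B i) := by simp [c]
  have hc : ‖c‖ ≤ 1 := by
    change ‖(c : K →L[𝕜] K)‖ ≤ 1
    rw [hc_coe, norm_smul, norm_inv, RCLike.norm_natCast]
    refine inv_mul_le_one_of_le₀ ?_ (Nat.cast_nonneg _)
    calc ‖1 + ∑ i, B i‖ ≤ ‖(1 : K →L[𝕜] K)‖ + ∑ i, ‖B i‖ :=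
          (norm_add_le _ _).trans (by gcongr; exact norm_sum_le _ _)
      _ ≤ 1 + ∑ _i : ι, (1 : ℝ) := by
          gcongr with i
          exacts [ContinuousLinearMap.norm_id_le, hB i]
      _ = n := by simp [n, add_comm]
  have hχc : χ c = 1 := by
    simp only [c, map_smul, map_add, map_one, map_sum, hχ, Finset.sum_const, Finset.card_univ,
      nsmul_eq_mul, mul_one, smul_eq_mul]
    rw [show 1 + (Fintype.card ι : 𝕜) = n by simp [n, add_comm], inv_mul_cancel₀ hn]
  obtain ⟨y, hy0, hy⟩ :=
    exists_norm_apply_sub_le_of_algHom h𝔅 χ hc hχc (ε := δ ^ 2 / (2 * n)) (by positivity)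
  have hsum : ∑ i, (B i y - y) = (n : 𝕜) • ((c : K →L[𝕜] K) y - y) := by
    rw [hc_coe, smul_sub, smul_apply, smul_smul, mul_inv_cancel₀ hn, one_smul, add_apply,
      sum_apply, Finset.sum_sub_distrib, hn_def]
    simp only [Finset.sum_const, Finset.card_univ, one_apply_eq_self, Nat.cast_add, Nat.cast_one]
    module
  refine ⟨y, hy0, fun j => ?_⟩
  have hsq : ‖B j y - y‖ ^ 2 ≤ (δ * ‖y‖) ^ 2 :=
    calc ‖B j y - y‖ ^ 2 ≤ 2 * ‖∑ i, (B i y - y)‖ * ‖y‖ :=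
          norm_apply_sub_sq_le_two_mul_norm_sum hB y j
      _ ≤ 2 * (n * (δ ^ 2 / (2 * n) * ‖y‖)) * ‖y‖ := by
          rw [hsum, norm_smul, RCLike.norm_natCast]
          gcongr
      _ = (δ * ‖y‖) ^ 2 := by
          field_simp [(by positivity : (n : ℝ) ≠ 0)]
  exact (pow_le_pow_iff_left₀ (norm_nonneg _) (by positivity) two_ne_zero).mp hsq

section PolyEval

variable {H K E : Type*}
  [NormedAddCommGroup H] [InnerProductSpace ℂ H]
  [NormedAddCommGroup K] [InnerProductSpace ℂ K]
  [NormedAddCommGroup E] [InnerProductSpace ℂ E]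
  {t : H →ₗ[ℂ] K →ₗ[ℂ] E} {d : ℕ} {A : Fin d → H →L[ℂ] H} {B : Fin d → K →L[ℂ] K}
  {AB : Fin d → E →L[ℂ] E}

lemma norm_tensor_polyEval_sub_le
    (ht : ∀ (x x' : H) (y y' : K),
      (inner ℂ (t x y) (t x' y') : ℂ) = (inner ℂ x x' : ℂ) * (inner ℂ y y' : ℂ))
    (hB : ∀ j, ‖B j‖ ≤ 1) (hAB : ∀ j x y, AB j (t x y) = t (A j x) (B j y))
    (p : MvPolynomial (Fin d) ℂ) (x : H) {y : K} {δ : ℝ} (hy : ∀ j, ‖B j y - y‖ ≤ δ) :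
    ‖t (polyEval A p x) y - polyEval AB p (t x y)‖ ≤
      (∑ α ∈ p.support, ‖p.coeff α‖ * ‖tuplePow A α x‖ * α.degree) * δ := by
  have hsum : t (polyEval A p x) y - polyEval AB p (t x y) =
      ∑ α ∈ p.support, p.coeff α • t (tuplePow A α x) (y - tuplePow B α y) := by
    simp only [polyEval_eq_sum, sum_apply, smul_apply, map_sum, map_smul,
      LinearMap.sum_apply, LinearMap.smul_apply, tuplePow_apply_tensor t A B AB hAB,
      ← Finset.sum_sub_distrib, ← smul_sub, map_sub]
  rw [hsum, Finset.sum_mul]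
  refine (norm_sum_le _ _).trans (Finset.sum_le_sum fun α _ => ?_)
  rw [norm_smul, norm_tensor_of_inner t ht, norm_sub_rev, mul_assoc, mul_assoc]
  gcongr
  exact norm_tuplePow_apply_sub_le B hB y hy α

lemma norm_polyEval_apply_le
    (ht : ∀ (x x' : H) (y y' : K),
      (inner ℂ (t x y) (t x' y') : ℂ) = (inner ℂ x x' : ℂ) * (inner ℂ y y' : ℂ))
    (hB : ∀ j, ‖B j‖ ≤ 1) (hAB : ∀ j x y, AB j (t x y) = t (A j x) (B j y))
    (happrox : ∀ δ > 0, ∃ y ≠ 0, ∀ j, ‖B j y - y‖ ≤ δ * ‖y‖)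
    (p : MvPolynomial (Fin d) ℂ) (x : H) :
    ‖polyEval A p x‖ ≤ ‖polyEval AB p‖ * ‖x‖ := by
  set M := ∑ α ∈ p.support, ‖p.coeff α‖ * ‖tuplePow A α x‖ * α.degree
  have hM : 0 ≤ M := by positivity
  refine le_of_forall_pos_le_add fun ε hε => ?_
  obtain ⟨y, hy0, hy⟩ := happrox (ε / (M + 1)) (by positivity)
  have hMε : M * (ε / (M + 1)) ≤ ε := by
    rw [mul_div_assoc', div_le_iff₀ (by positivity)]
    nlinarith
  have key : ‖polyEval A p x‖ * ‖y‖ ≤ (‖polyEval AB p‖ * ‖x‖ + M * (ε / (M + 1))) * ‖y‖ :=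
    calc ‖polyEval A p x‖ * ‖y‖ = ‖t (polyEval A p x) y‖ :=
          (norm_tensor_of_inner t ht _ _).symm
      _ ≤ ‖polyEval AB p (t x y)‖ + ‖t (polyEval A p x) y - polyEval AB p (t x y)‖ :=
        norm_le_insert' _ _
      _ ≤ ‖polyEval AB p‖ * (‖x‖ * ‖y‖) + M * (ε / (M + 1) * ‖y‖) := by
        gcongr
        · exact (polyEval AB p).le_opNorm_of_le (norm_tensor_of_inner t ht x y).le
        · exact norm_tensor_polyEval_sub_le ht hB hAB p x hy
      _ = (‖polyEval AB p‖ * ‖x‖ + M * (ε / (M + 1))) * ‖y‖ := by ring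
  linarith [le_of_mul_le_mul_right key (norm_pos_iff.2 hy0)]

end PolyEval

theorem tensor_polyEval_norm_ge_general {d : ℕ} {H K E : Type*}
    [NormedAddCommGroup H] [InnerProductSpace ℂ H]
    [NormedAddCommGroup K] [InnerProductSpace ℂ K] [CompleteSpace K]
    [NormedAddCommGroup E] [InnerProductSpace ℂ E]
    (A : Fin d → (H →L[ℂ] H)) (B : Fin d → (K →L[ℂ] K))
    (hBcontr : ∀ j, ‖B j‖ ≤ 1)
    (χ : ((Algebra.adjoin ℂ (Set.range B)).topologicalClosure) →ₐ[ℂ] ℂ)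
    (hχ : ∀ j (hj : B j ∈ (Algebra.adjoin ℂ (Set.range B)).topologicalClosure),
      χ ⟨B j, hj⟩ = 1)
    (t : H →ₗ[ℂ] K →ₗ[ℂ] E)
    (ht_inner : ∀ (x x' : H) (y y' : K),
      (inner ℂ (t x y) (t x' y') : ℂ) = (inner ℂ x x' : ℂ) * (inner ℂ y y' : ℂ))
    (AB : Fin d → (E →L[ℂ] E))
    (hAB : ∀ j x y, AB j (t x y) = t (A j x) (B j y))
    :
    ∀ p : MvPolynomial (Fin d) ℂ, ‖polyEval A p‖ ≤ ‖polyEval AB p‖ := by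
  intro p
  have hmem j : B j ∈ (Algebra.adjoin ℂ (Set.range B)).topologicalClosure :=
    Subalgebra.le_topologicalClosure _ (Algebra.subset_adjoin ⟨j, rfl⟩)
  have happrox (δ : ℝ) (hδ : 0 < δ) : ∃ y ≠ 0, ∀ j, ‖B j y - y‖ ≤ δ * ‖y‖ :=
    exists_forall_norm_apply_sub_le_of_algHom hBcontr
      (Subalgebra.isClosed_topologicalClosure _) hmem χ (fun j => hχ j (hmem j)) hδ
  exact (polyEval A p).opNorm_le_bound (norm_nonneg _)
    (norm_polyEval_apply_le ht_inner hBcontr hAB happrox p)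

/-- Let `B` be a commuting `d`-tuple of contractions on a Hilbert space `K`
admitting a unital multiplicative linear functional `χ` on the unital Banach algebra generated
by `B_1, …, B_d` with `χ(B_j) = 1` for all `j`. Then for any commuting `d`-tuple `A` of bounded
operators on a Hilbert space `H` and any polynomial `p` in `d` variables,
`‖p(A ⊗ B)‖ ≥ ‖p(A)‖`, where `A ⊗ B = (A_1 ⊗ B_1, …, A_d ⊗ B_d)` acts on the Hilbert space
tensor product `H ⊗ K` (axiomatized here by a bilinear map `t` with
`⟪t x y, t x' y'⟫ = ⟪x,x'⟫⟪y,y'⟫`, total elementary tensors, and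
`(A_j ⊗ B_j)(t x y) = t (A_j x) (B_j y)`). -/
theorem tensor_polyEval_norm_ge {d : ℕ} {H K E : Type*}
    [NormedAddCommGroup H] [InnerProductSpace ℂ H] [CompleteSpace H]
    [NormedAddCommGroup K] [InnerProductSpace ℂ K] [CompleteSpace K]
    [NormedAddCommGroup E] [InnerProductSpace ℂ E] [CompleteSpace E]
    (A : Fin d → (H →L[ℂ] H)) (B : Fin d → (K →L[ℂ] K))
    (hAcomm : ∀ i j, Commute (A i) (A j)) (hBcomm : ∀ i j, Commute (B i) (B j))
    (hBcontr : ∀ j, ‖B j‖ ≤ 1)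
    (χ : ((Algebra.adjoin ℂ (Set.range B)).topologicalClosure) →ₐ[ℂ] ℂ)
    (hχ : ∀ j (hj : B j ∈ (Algebra.adjoin ℂ (Set.range B)).topologicalClosure),
      χ ⟨B j, hj⟩ = 1)
    (t : H →ₗ[ℂ] K →ₗ[ℂ] E)
    (ht_inner : ∀ (x x' : H) (y y' : K),
      (inner ℂ (t x y) (t x' y') : ℂ) = (inner ℂ x x' : ℂ) * (inner ℂ y y' : ℂ))
    (ht_dense : (Submodule.span ℂ {e : E | ∃ x y, e = t x y}).topologicalClosure = ⊤)
    (AB : Fin d → (E →L[ℂ] E))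
    (hAB : ∀ j x y, AB j (t x y) = t (A j x) (B j y))
    :
    ∀ p : MvPolynomial (Fin d) ℂ, ‖polyEval A p‖ ≤ ‖polyEval AB p‖ :=
  tensor_polyEval_norm_ge_general A B hBcontr χ hχ t ht_inner AB hAB
end
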